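/- Let $n \ge 2$ and let $a \in \mathbb{R}^n$ with all entries positive. For any $1 \le m \le k \le n-1$ and each index $i$, one has $\sigma_{m;i}(a)\,\sigma_{k-1;i}(a) \ge \sigma_{m-1;i}(a)\,\sigma_{k;i}(a)$. -/
import Mathlib


open Finset

/-- The `k`-th elementary symmetric function of the variables `a i` for `i ∈ s`. -/
noncomputable def esym {n : ℕ} (s : Finset (Fin n)) (k : ℕ) (a : Fin n → ℝ) : ℝ :=
  ∑ T ∈ s.powersetCard k, ∏ i ∈ T, a i

lemma esym_zero {n : ℕ} (s : Finset (Fin n)) (a : Fin n → ℝ) : esym s 0 a = 1 := by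
  simp [esym]

lemma esym_nonneg {n : ℕ} (s : Finset (Fin n)) (k : ℕ) (a : Fin n → ℝ)
    (ha : ∀ i, 0 ≤ a i) : 0 ≤ esym s k a :=
  Finset.sum_nonneg fun T _ => Finset.prod_nonneg fun i _ => ha i

lemma esym_insert {n : ℕ} {x : Fin n} {s : Finset (Fin n)} (hx : x ∉ s) (k : ℕ)
    (a : Fin n → ℝ) :
    esym (insert x s) (k + 1) a = esym s (k + 1) a + a x * esym s k a := by
  unfold esym
  rw [Finset.powersetCard_succ_insert hx, Finset.sum_union, Finset.sum_image, Finset.mul_sum]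
  · congr 1
    refine Finset.sum_congr rfl fun T hT => ?_
    have hxT : x ∉ T := fun h => hx ((Finset.mem_powersetCard.1 hT).1 h)
    rw [Finset.prod_insert hxT]
  · intro T hT U hU h
    have hxT : x ∉ T := fun h => hx ((Finset.mem_powersetCard.1 hT).1 h)
    have hxU : x ∉ U := fun h => hx ((Finset.mem_powersetCard.1 hU).1 h)
    have := congrArg (fun S => Finset.erase S x) h
    simpa [Finset.erase_insert hxT, Finset.erase_insert hxU] using this
  · rw [Finset.disjoint_left]
    intro T hT hT'
    obtain ⟨U, hU, rfl⟩ := Finset.mem_image.1 hT'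
    exact hx ((Finset.mem_powersetCard.1 hT).1 (Finset.mem_insert_self x U))

lemma esym_key {n : ℕ} (a : Fin n → ℝ) (ha : ∀ i, 0 ≤ a i) (s : Finset (Fin n)) :
    ∀ p q : ℕ, p ≤ q →
      esym s p a * esym s (q + 1) a ≤ esym s (p + 1) a * esym s q a := by
  induction s using Finset.induction_on with
  | empty =>
    intro p q hpq
    have h1 : esym (∅ : Finset (Fin n)) (q + 1) a = 0 := by
      have he : Finset.powersetCard (q + 1) (∅ : Finset (Fin n)) = ∅ :=
        Finset.powersetCard_eq_empty.2 (by simp)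
      simp [esym, he]
    rw [h1, mul_zero]
    exact mul_nonneg (esym_nonneg _ _ _ ha) (esym_nonneg _ _ _ ha)
  | @insert x t hx IH =>
    intro p q hpq
    have hA : 0 ≤ a x := ha x
    have E : ∀ j, 0 ≤ esym t j a := fun j => esym_nonneg _ _ _ ha
    match p, q, hpq with
    | 0, 0, _ => rw [mul_comm]
    | 0, (r + 1), _ =>
      rw [esym_zero, one_mul, esym_insert hx, esym_insert hx, esym_insert hx, esym_zero]
      have h1 : esym t (r + 1) a * esym t (r + 1 + 1) a
          ≤ esym t (r + 1 + 1) a * esym t (r + 1) a := le_of_eq (mul_comm _ _)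
      have h2 := IH 0 (r + 1) (Nat.zero_le _)
      rw [esym_zero, one_mul] at h2
      nlinarith [mul_nonneg hA (mul_nonneg (E 1) (E r)), mul_nonneg (mul_nonneg hA hA) (E r),
        mul_nonneg hA (E (r + 1))]
    | (p' + 1), (q' + 1), hpq =>
      have hpq' : p' ≤ q' := Nat.succ_le_succ_iff.1 hpq
      rw [esym_insert hx, esym_insert hx, esym_insert hx, esym_insert hx]
      have h1 := IH (p' + 1) (q' + 1) hpq
      have h2 := IH p' q' hpq'
      have h3 : esym t p' a * esym t (q' + 1 + 1) a
          ≤ esym t (p' + 1 + 1) a * esym t q' a := by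
        rcases Nat.lt_or_ge p' q' with h | h
        · calc esym t p' a * esym t (q' + 1 + 1) a
              ≤ esym t (p' + 1) a * esym t (q' + 1) a := IH p' (q' + 1) (by omega)
            _ ≤ esym t (p' + 1 + 1) a * esym t q' a := IH (p' + 1) q' (by omega)
        · have : p' = q' := le_antisymm hpq' h
          subst this
          exact le_of_eq (mul_comm _ _)
      nlinarith [mul_le_mul_of_nonneg_left h3 hA,
        mul_le_mul_of_nonneg_left h2 (mul_nonneg hA hA),
        mul_nonneg hA (mul_nonneg (E (p' + 1)) (E (q' + 1)))]

/-- σ_{m;i}(a) σ_{k-1;i}(a) ≥ σ_{m-1;i}(a) σ_{k;i}(a) for positive tuples, 1 ≤ m ≤ k ≤ n-1. -/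
theorem stmt_9 (n k m : ℕ) (hn : 2 ≤ n) (hm : 1 ≤ m) (hmk : m ≤ k) (hkn : k ≤ n - 1)
    (a : Fin n → ℝ) (hpos : ∀ i, 0 < a i) (i : Fin n) :
    esym (Finset.univ.erase i) (m - 1) a * esym (Finset.univ.erase i) k a
      ≤ esym (Finset.univ.erase i) m a * esym (Finset.univ.erase i) (k - 1) a := by
  have hm' : m - 1 + 1 = m := by omega
  have hk' : k - 1 + 1 = k := by omega
  have := esym_key a (fun j => (hpos j).le) (Finset.univ.erase i) (m - 1) (k - 1) (by omega)
  rwa [hm', hk'] at this
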